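/- arXiv:2512.05727 — 7 statements merged into one kernel-verified Lean document; each statement's English description precedes it below -/
import Mathlib

section
/- Let γ > 0, x₁₀ > 0, x₂₀ ≤ 0 with x₂₀² < 2γx₁₀. Define B = γx₁₀²/(2γx₁₀ − x₂₀²), ω = √(γ/B), φ = π + arccos(1 − x₂₀²/(γx₁₀)). Then the candidate trajectory x₁(t) = −(γ/ω²)·cos(ωt + φ) + B, x₂(t) = (γ/ω)·sin(ωt + φ) satisfies the initial conditions x₁(0) = x₁₀ and x₂(0) = x₂₀. -/
/-- The harmonic candidate trajectory
`x₁(t) = −(γ/ω²)cos(ωt+φ) + B`, `x₂(t) = (γ/ω)sin(ωt+φ)` with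
`B = γx₁₀²/(2γx₁₀ − x₂₀²)`, `ω = √(γ/B)`, `φ = π + arccos(1 − x₂₀²/(γx₁₀))`
satisfies the initial conditions `x₁(0) = x₁₀`, `x₂(0) = x₂₀`. -/
theorem stmt_2 (γ x₁₀ x₂₀ B ω φ : ℝ) (hγ : 0 < γ) (h₁ : 0 < x₁₀) (h₂ : x₂₀ ≤ 0)
    (h₃ : x₂₀ ^ 2 < 2 * γ * x₁₀)
    (hB : B = γ * x₁₀ ^ 2 / (2 * γ * x₁₀ - x₂₀ ^ 2))
    (hω : ω = Real.sqrt (γ / B))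
    (hφ : φ = Real.pi + Real.arccos (1 - x₂₀ ^ 2 / (γ * x₁₀))) :
    -(γ / ω ^ 2) * Real.cos (ω * 0 + φ) + B = x₁₀ ∧
    γ / ω * Real.sin (ω * 0 + φ) = x₂₀ := by
  have hD : 0 < 2 * γ * x₁₀ - x₂₀ ^ 2 := by linarith
  have hBpos : 0 < B := by rw [hB]; positivity
  have hωpos : 0 < ω := by rw [hω]; exact Real.sqrt_pos.2 (by positivity)
  have hω2 : ω ^ 2 = γ / B := by rw [hω, Real.sq_sqrt (by positivity)]
  have hratio : γ / ω ^ 2 = B := by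
    rw [hω2]; field_simp
  set u := 1 - x₂₀ ^ 2 / (γ * x₁₀) with hu
  have hnum : 0 ≤ x₂₀ ^ 2 / (γ * x₁₀) := by positivity
  have hu1 : u ≤ 1 := by simp [hu]; linarith
  have hu2 : -1 ≤ u := by
    rw [hu]
    have : x₂₀ ^ 2 / (γ * x₁₀) ≤ 2 := by
      rw [div_le_iff₀ (by positivity)]; nlinarith
    linarith
  have hcos : Real.cos (ω * 0 + φ) = -u := by
    rw [mul_zero, zero_add, hφ, Real.cos_add, Real.cos_pi, Real.sin_pi,
      Real.cos_arccos hu2 hu1]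
    ring
  have hsin : Real.sin (ω * 0 + φ) = -Real.sqrt (1 - u ^ 2) := by
    rw [mul_zero, zero_add, hφ, Real.sin_add, Real.cos_pi, Real.sin_pi,
      Real.sin_arccos]
    ring
  constructor
  · rw [hcos, hratio]
    have : B * (1 + u) = x₁₀ := by
      rw [hB, hu]; field_simp; rw [div_eq_iff (by linarith)]; ring
    linarith [this]
  · rw [hsin]
    have hkey : (γ / ω) ^ 2 * (1 - u ^ 2) = x₂₀ ^ 2 := by
      have : (γ / ω) ^ 2 = γ * B := by
        rw [div_pow, hω2]; field_simp
      rw [this, hB, hu]; field_simp; rw [div_eq_iff (by linarith)]; ring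
    have h1u : 0 ≤ 1 - u ^ 2 := by nlinarith
    have hpos : 0 ≤ γ / ω := by positivity
    calc γ / ω * -Real.sqrt (1 - u ^ 2)
        = -(Real.sqrt ((γ / ω) ^ 2) * Real.sqrt (1 - u ^ 2)) := by
          rw [Real.sqrt_sq hpos]; ring
      _ = -Real.sqrt ((γ / ω) ^ 2 * (1 - u ^ 2)) := by
          rw [Real.sqrt_mul (sq_nonneg _)]
      _ = -Real.sqrt (x₂₀ ^ 2) := by rw [hkey]
      _ = x₂₀ := by rw [Real.sqrt_sq_eq_abs, abs_of_nonpos h₂]; ring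
end

section
/- Let γ > 0, x₁₀ > 0, x₂₀ ≤ 0 with x₂₀² < 2γx₁₀. Define B = γx₁₀²/(2γx₁₀ − x₂₀²), ω = √(γ/B), φ = π + arccos(1 − x₂₀²/(γx₁₀)), and x₁(t) = −(γ/ω²)·cos(ωt + φ) + B, x₂(t) = (γ/ω)·sin(ωt + φ). Then x₁'(t) = x₂(t) for all t ∈ ℝ, and for every t with cos(ωt + φ) ≠ 1 (equivalently x₁(t) ≠ 0) one has x₂'(t) − x₂(t)²/x₁(t) + γ = 0, i.e. the candidate trajectory solves the unperturbed closed-loop differential equation in the fourth quadrant. -/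
/-- The candidate trajectory `x₁(t) = −(γ/ω²)cos(ωt+φ) + B`,
`x₂(t) = (γ/ω)sin(ωt+φ)` satisfies `x₁' = x₂` everywhere and, whenever
`cos(ωt+φ) ≠ 1` (equivalently `x₁(t) ≠ 0`), the fourth-quadrant closed-loop
equation `x₂'(t) − x₂(t)²/x₁(t) + γ = 0`. -/
theorem stmt_3 (γ x₁₀ x₂₀ B ω φ : ℝ) (hγ : 0 < γ) (h₁ : 0 < x₁₀) (h₂ : x₂₀ ≤ 0)
    (h₃ : x₂₀ ^ 2 < 2 * γ * x₁₀)
    (hB : B = γ * x₁₀ ^ 2 / (2 * γ * x₁₀ - x₂₀ ^ 2))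
    (hω : ω = Real.sqrt (γ / B))
    (hφ : φ = Real.pi + Real.arccos (1 - x₂₀ ^ 2 / (γ * x₁₀))) :
    (∀ t : ℝ, HasDerivAt (fun s : ℝ => -(γ / ω ^ 2) * Real.cos (ω * s + φ) + B)
      (γ / ω * Real.sin (ω * t + φ)) t) ∧
    (∀ t : ℝ, Real.cos (ω * t + φ) ≠ 1 →
      deriv (fun s : ℝ => γ / ω * Real.sin (ω * s + φ)) t
        - (γ / ω * Real.sin (ω * t + φ)) ^ 2
            / (-(γ / ω ^ 2) * Real.cos (ω * t + φ) + B) + γ = 0) := by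
  have hD : 0 < 2 * γ * x₁₀ - x₂₀ ^ 2 := by linarith
  have hBpos : 0 < B := by rw [hB]; positivity
  have hgB : 0 < γ / B := by positivity
  have hωpos : 0 < ω := by rw [hω]; exact Real.sqrt_pos.mpr hgB
  have hωne : ω ≠ 0 := hωpos.ne'
  have hω2 : ω ^ 2 = γ / B := by rw [hω, Real.sq_sqrt hgB.le]
  have hlin : ∀ t : ℝ, HasDerivAt (fun s : ℝ => ω * s + φ) ω t := by
    intro t
    simpa using ((hasDerivAt_id t).const_mul ω).add_const φ
  constructor
  · intro t
    have h := (((Real.hasDerivAt_cos (ω * t + φ)).comp t (hlin t)).const_mul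
      (-(γ / ω ^ 2))).add_const B
    refine h.congr_deriv ?_
    field_simp
  · intro t hc
    have hder : HasDerivAt (fun s : ℝ => γ / ω * Real.sin (ω * s + φ))
        (γ * Real.cos (ω * t + φ)) t := by
      have h := ((Real.hasDerivAt_sin (ω * t + φ)).comp t (hlin t)).const_mul (γ / ω)
      refine h.congr_deriv ?_
      field_simp
    rw [hder.deriv]
    set c := Real.cos (ω * t + φ) with hcdef
    set s := Real.sin (ω * t + φ) with hsdef
    have hs2 : s ^ 2 = 1 - c ^ 2 := by
      have := Real.sin_sq_add_cos_sq (ω * t + φ)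
      rw [← hcdef, ← hsdef] at this; linarith
    have hx1 : -(γ / ω ^ 2) * c + B = B * (1 - c) := by
      rw [hω2]; field_simp; ring
    have hx1ne : B * (1 - c) ≠ 0 := by
      apply mul_ne_zero hBpos.ne'
      intro h; apply hc; linarith
    rw [hx1]
    have hgω : (γ / ω) ^ 2 = γ * B := by
      rw [div_pow, hω2]; field_simp
    have h1c : (1 : ℝ) - c ≠ 0 := fun h => hc (by linarith)
    rw [mul_pow, hgω, hs2]
    field_simp
    ring
end

section
/- Let γ > 0, x₁₀ > 0, x₂₀ ≤ 0 with x₂₀² < 2γx₁₀. Define B = γx₁₀²/(2γx₁₀ − x₂₀²), ω = √(γ/B), φ = π + arccos(1 − x₂₀²/(γx₁₀)), and x₁(t) = −(γ/ω²)·cos(ωt + φ) + B, x₂(t) = (γ/ω)·sin(ωt + φ). Set T = (2π − φ)/ω. Then T = x₁₀·(π − arccos(1 − x₂₀²/(γx₁₀)))/√(2γx₁₀ − x₂₀²); moreover x₁(T) = 0 and x₂(T) = 0, and for every t ∈ [0, T] one has x₁(t) ≥ 0 and x₂(t) ≤ 0 (the trajectory converges to the origin in the finite time T without leaving the closed fourth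 quadrant, hence without overshoot). -/
/-- Finite convergence time of the analytic fourth-quadrant
solution: for `T = (2π − φ)/ω` one has the explicit formula
`T = x₁₀(π − arccos(1 − x₂₀²/(γx₁₀)))/√(2γx₁₀ − x₂₀²)`, the trajectory reaches
the origin at time `T`, and stays in the closed fourth quadrant on `[0, T]`
(non-overshooting). -/
theorem stmt_5 (γ x₁₀ x₂₀ B ω φ T : ℝ) (hγ : 0 < γ) (h₁ : 0 < x₁₀) (h₂ : x₂₀ ≤ 0)
    (h₃ : x₂₀ ^ 2 < 2 * γ * x₁₀)
    (hB : B = γ * x₁₀ ^ 2 / (2 * γ * x₁₀ - x₂₀ ^ 2))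
    (hω : ω = Real.sqrt (γ / B))
    (hφ : φ = Real.pi + Real.arccos (1 - x₂₀ ^ 2 / (γ * x₁₀)))
    (hT : T = (2 * Real.pi - φ) / ω) :
    T = x₁₀ * (Real.pi - Real.arccos (1 - x₂₀ ^ 2 / (γ * x₁₀)))
          / Real.sqrt (2 * γ * x₁₀ - x₂₀ ^ 2) ∧
    -(γ / ω ^ 2) * Real.cos (ω * T + φ) + B = 0 ∧
    γ / ω * Real.sin (ω * T + φ) = 0 ∧
    (∀ t ∈ Set.Icc (0 : ℝ) T,
      0 ≤ -(γ / ω ^ 2) * Real.cos (ω * t + φ) + B ∧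
      γ / ω * Real.sin (ω * t + φ) ≤ 0) := by
  have hD : 0 < 2 * γ * x₁₀ - x₂₀ ^ 2 := by nlinarith [sq_nonneg x₂₀]
  have hB0 : 0 < B := by
    rw [hB]; positivity
  have hγB : γ / B = (2 * γ * x₁₀ - x₂₀ ^ 2) / x₁₀ ^ 2 := by
    rw [hB]; field_simp
  have hsD : 0 < Real.sqrt (2 * γ * x₁₀ - x₂₀ ^ 2) := Real.sqrt_pos.mpr hD
  have hωeq : ω = Real.sqrt (2 * γ * x₁₀ - x₂₀ ^ 2) / x₁₀ := by
    rw [hω, hγB, show (2 * γ * x₁₀ - x₂₀ ^ 2) / x₁₀ ^ 2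
        = (Real.sqrt (2 * γ * x₁₀ - x₂₀ ^ 2) / x₁₀) ^ 2 by
      rw [div_pow, Real.sq_sqrt (le_of_lt hD)]]
    exact Real.sqrt_sq (by positivity)
  have hω0 : 0 < ω := by rw [hωeq]; positivity
  have hω2 : ω ^ 2 = γ / B := by
    rw [hω, Real.sq_sqrt (by positivity)]
  have hγω2 : γ / ω ^ 2 = B := by
    rw [hω2]; field_simp
  -- the constant c and arccos bounds
  set a := Real.arccos (1 - x₂₀ ^ 2 / (γ * x₁₀)) with ha
  have hc1 : -1 < 1 - x₂₀ ^ 2 / (γ * x₁₀) := by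
    rw [neg_lt, neg_sub]
    have : x₂₀ ^ 2 / (γ * x₁₀) < 2 := by
      rw [div_lt_iff₀ (by positivity)]; nlinarith
    linarith
  have hc2 : 1 - x₂₀ ^ 2 / (γ * x₁₀) ≤ 1 := by
    have : 0 ≤ x₂₀ ^ 2 / (γ * x₁₀) := by positivity
    linarith
  have ha0 : 0 ≤ a := Real.arccos_nonneg _
  have haπ : a < Real.pi := by
    rcases lt_or_eq_of_le (Real.arccos_le_pi (1 - x₂₀ ^ 2 / (γ * x₁₀))) with h | h
    · exact h
    · exact absurd (Real.arccos_eq_pi.mp h) (by linarith)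
  have hφπ : Real.pi ≤ φ := by rw [hφ]; linarith
  have hφ2π : φ < 2 * Real.pi := by rw [hφ]; linarith
  have hωT : ω * T + φ = 2 * Real.pi := by
    rw [hT]; field_simp; ring
  have hT0 : 0 ≤ T := by
    rw [hT]
    apply div_nonneg _ (le_of_lt hω0)
    linarith
  refine ⟨?_, ?_, ?_, ?_⟩
  · rw [hT, hωeq, hφ]
    field_simp
    ring
  · rw [hωT, Real.cos_two_pi, hγω2]; ring
  · rw [hωT, Real.sin_two_pi, mul_zero]
  · intro t ht
    obtain ⟨ht0, htT⟩ := ht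
    have hθlo : Real.pi ≤ ω * t + φ := by
      have : 0 ≤ ω * t := by positivity
      linarith
    have hθhi : ω * t + φ ≤ 2 * Real.pi := by
      have : ω * t ≤ ω * T := by
        exact mul_le_mul_of_nonneg_left htT (le_of_lt hω0)
      linarith [hωT]
    constructor
    · rw [hγω2]
      nlinarith [Real.cos_le_one (ω * t + φ)]
    · apply mul_nonpos_of_nonneg_of_nonpos
      · positivity
      · have := Real.sin_nonpos_of_nonpos_of_neg_pi_le
          (x := ω * t + φ - 2 * Real.pi) (by linarith) (by linarith)
        rwa [Real.sin_sub_two_pi] at this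
end

section
/- Let γ > 0, T > 0, and let x = (x₁, x₂) : [0, T] → ℝ² be differentiable with x₁(t) ≠ 0 for all t ∈ [0, T], satisfying ẋ₁(t) = x₂(t) and ẋ₂(t) = −γ·sign(x₁(t)) − δ(x(t)), where δ(x) = |x₂|·x₂/|x₁| if x₁x₂ < 0 and δ(x) = 0 otherwise. Then the energy function t ↦ E(x(t)) = γ·|x₁(t)| + ½·x₂(t)² is monotone nonincreasing on [0, T]. -/
/-- Along any solution of the unperturbed closed-loop system
`ẋ₁ = x₂`, `ẋ₂ = −γ·sign(x₁) − δ(x)` (with `δ(x) = |x₂|x₂/|x₁|` if `x₁x₂ < 0`,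
else `0`) on `[0, T]` with `x₁(t) ≠ 0`, the energy
`E(x(t)) = γ|x₁(t)| + ½x₂(t)²` is monotone nonincreasing. -/
theorem stmt_7 (γ T : ℝ) (hγ : 0 < γ) (hT : 0 < T) (x₁ x₂ : ℝ → ℝ)
    (hne : ∀ t ∈ Set.Icc (0 : ℝ) T, x₁ t ≠ 0)
    (h₁ : ∀ t ∈ Set.Icc (0 : ℝ) T, HasDerivAt x₁ (x₂ t) t)
    (h₂ : ∀ t ∈ Set.Icc (0 : ℝ) T, HasDerivAt x₂
      (-γ * Real.sign (x₁ t)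
        - (if x₁ t * x₂ t < 0 then |x₂ t| * x₂ t / |x₁ t| else 0)) t) :
    AntitoneOn (fun t => γ * |x₁ t| + (1 / 2) * (x₂ t) ^ 2)
      (Set.Icc (0 : ℝ) T) := by
  set E : ℝ → ℝ := fun t => γ * |x₁ t| + (1 / 2) * (x₂ t) ^ 2 with hE
  have key : ∀ t ∈ Set.Icc (0 : ℝ) T, HasDerivAt E
      (-(x₂ t) * (if x₁ t * x₂ t < 0 then |x₂ t| * x₂ t / |x₁ t| else 0)) t := by
    intro t ht
    have habs : HasDerivAt (fun s => |x₁ s|) (Real.sign (x₁ t) * x₂ t) t := by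
      have := (hasDerivAt_abs (hne t ht)).comp t (h₁ t ht)
      refine this.congr_deriv ?_
      rcases lt_or_gt_of_ne (hne t ht) with h | h
      · simp [Real.sign_of_neg h, h]
      · simp [Real.sign_of_pos h, h]
    have := ((habs.const_mul γ).add (((h₂ t ht).pow 2).const_mul (1/2 : ℝ)))
    refine this.congr_deriv ?_
    set δ := (if x₁ t * x₂ t < 0 then |x₂ t| * x₂ t / |x₁ t| else 0)
    ring
  have hcont : ContinuousOn E (Set.Icc 0 T) := fun t ht =>
    (key t ht).continuousAt.continuousWithinAt
  apply antitoneOn_of_deriv_nonpos (convex_Icc 0 T) hcont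
  · intro t ht
    rw [interior_Icc] at ht
    exact (key t (Set.mem_Icc_of_Ioo ht)).differentiableAt.differentiableWithinAt
  · intro t ht
    rw [interior_Icc] at ht
    have ht' := Set.mem_Icc_of_Ioo ht
    rw [(key t ht').deriv]
    by_cases h : x₁ t * x₂ t < 0
    · rw [if_pos h]
      have h2 : 0 ≤ |x₂ t| * (x₂ t)^2 / |x₁ t| := by positivity
      have : -(x₂ t) * (|x₂ t| * x₂ t / |x₁ t|) = -(|x₂ t| * (x₂ t)^2 / |x₁ t|) := by ring
      rw [this]; linarith
    · rw [if_neg h]; ring_nf; rfl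
end

section
/- Let γ, D, η, ε ∈ ℝ with γ − D − η > 0 and 0 < ε < √(2(γ − D − η)). Define V : ℝ² → ℝ by V(x) = (γ − D − η)·|x₁| + ε(x)·√|x₁|·sign(x₁)·x₂ + ½·x₂², where ε(x) = ε if x₁x₂ < 0 and ε(x) = 0 otherwise, and sign is the real sign function with sign(0) = 0. Then V(0) = 0 and V(x) > 0 for every x ≠ 0. -/
/-- Positive definiteness of the Lyapunov function candidate
`V(x) = (γ−D−η)|x₁| + ε(x)·√|x₁|·sign(x₁)·x₂ + ½x₂²` with `ε(x) = ε` if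
`x₁x₂ < 0` and `ε(x) = 0` otherwise, for `γ − D − η > 0` and
`0 < ε < √(2(γ−D−η))`. -/
theorem stmt_10 (γ D η ε : ℝ) (h₁ : 0 < γ - D - η) (h₂ : 0 < ε)
    (h₃ : ε < Real.sqrt (2 * (γ - D - η))) :
    ((γ - D - η) * |(0 : ℝ)| + (if (0 : ℝ) * (0 : ℝ) < 0 then ε else 0)
        * Real.sqrt |(0 : ℝ)| * Real.sign (0 : ℝ) * 0 + (1 / 2) * (0 : ℝ) ^ 2 = 0) ∧
    ∀ x : ℝ × ℝ, x ≠ 0 →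
      0 < (γ - D - η) * |x.1| + (if x.1 * x.2 < 0 then ε else 0)
        * Real.sqrt |x.1| * Real.sign x.1 * x.2 + (1 / 2) * x.2 ^ 2 := by
  constructor
  · simp
  · intro x hx
    set a := γ - D - η with ha
    have hε2 : ε ^ 2 < 2 * a := (Real.lt_sqrt h₂.le).mp h₃
    by_cases h : x.1 * x.2 < 0
    · have hx1 : x.1 ≠ 0 := fun h0 => by simp [h0] at h
      have hx2 : x.2 ≠ 0 := fun h0 => by simp [h0] at h
      have hsgn : Real.sign x.1 * x.2 = -|x.2| := by
        rcases lt_or_gt_of_ne hx1 with h1 | h1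
        · have h2 : 0 < x.2 := by nlinarith
          rw [Real.sign_of_neg h1, abs_of_pos h2]; ring
        · have h2 : x.2 < 0 := by nlinarith
          rw [Real.sign_of_pos h1, abs_of_neg h2]; ring
      rw [if_pos h]
      have hu : 0 < Real.sqrt |x.1| := Real.sqrt_pos.mpr (abs_pos.mpr hx1)
      have hu2 : Real.sqrt |x.1| ^ 2 = |x.1| := Real.sq_sqrt (abs_nonneg _)
      have h2 : x.2 ^ 2 = |x.2| ^ 2 := (sq_abs _).symm
      have key : ε * Real.sqrt |x.1| * Real.sign x.1 * x.2
          = -(ε * Real.sqrt |x.1| * |x.2|) := by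
        rw [mul_assoc, hsgn]; ring
      rw [key, h2]
      nlinarith [sq_nonneg (|x.2| - ε * Real.sqrt |x.1|), mul_pos hu hu, hu2, hε2]
    · rw [if_neg h]
      have : x.1 ≠ 0 ∨ x.2 ≠ 0 := by
        by_contra hc
        push_neg at hc
        exact hx (Prod.ext hc.1 hc.2)
      rcases this with h1 | h1
      · have := abs_pos.mpr h1
        nlinarith [sq_nonneg x.2]
      · have hp := abs_pos.mpr h1
        nlinarith [mul_pos hp hp, sq_abs x.2, abs_nonneg x.1]
end

section
/- Let γ, D, η, ε ∈ ℝ with D ≥ 0, η ≥ 0, ε > 0, and let x₁, x₂, d ∈ ℝ with x₁·x₂ < 0 and |d| ≤ D. Then, with sign the real sign function: −(γ − sign(x₁)·d)·ε·√|x₁| − |x₂|³/|x₁| + ε·(x₂²/√|x₁|)·(½ − sign(x₁)·sign(x₂)) + x₂·d + |x₂|·(D + η) ≤ −(γ − ½ − D − (2/(3ε))·(2D + η)^{3/2})·ε·√|x₁| − (2/3 − ε)·|x₂|³/|x₁|. -/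
set_option maxHeartbeats 1000000 in

/-- Key estimate on the derivative of the Lyapunov function in
the region `x₁x₂ < 0`: for `D ≥ 0`, `η ≥ 0`, `ε > 0`, `|d| ≤ D`,
`−(γ − sign(x₁)d)ε√|x₁| − |x₂|³/|x₁| + ε(x₂²/√|x₁|)(½ − sign(x₁)sign(x₂))
 + x₂d + |x₂|(D+η)
 ≤ −(γ − ½ − D − (2/(3ε))(2D+η)^{3/2})ε√|x₁| − (2/3 − ε)|x₂|³/|x₁|`. -/
theorem stmt_13 (γ D η ε x₁ x₂ d : ℝ) (hD : 0 ≤ D) (hη : 0 ≤ η) (hε : 0 < ε)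
    (hx : x₁ * x₂ < 0) (hd : |d| ≤ D) :
    -(γ - Real.sign x₁ * d) * ε * Real.sqrt |x₁| - |x₂| ^ 3 / |x₁|
      + ε * (x₂ ^ 2 / Real.sqrt |x₁|) * (1 / 2 - Real.sign x₁ * Real.sign x₂)
      + x₂ * d + |x₂| * (D + η)
    ≤ -(γ - 1 / 2 - D - (2 / (3 * ε)) * (2 * D + η) ^ ((3 : ℝ) / 2)) * ε
        * Real.sqrt |x₁|
      - (2 / 3 - ε) * |x₂| ^ 3 / |x₁| := by
  have hx1 : x₁ ≠ 0 := by rintro rfl; simp at hx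
  have habs : (0:ℝ) < |x₁| := abs_pos.mpr hx1
  obtain ⟨a, ha, hae, hae2⟩ : ∃ a : ℝ, 0 < a ∧ Real.sqrt |x₁| = a ∧ |x₁| = a ^ 2 :=
    ⟨Real.sqrt |x₁|, Real.sqrt_pos.mpr habs, rfl, (Real.sq_sqrt (abs_nonneg x₁)).symm⟩
  obtain ⟨m, hm, hme, hme2⟩ : ∃ m : ℝ, 0 ≤ m ∧ (2 * D + η) ^ ((3 : ℝ) / 2) = m ^ 3 ∧
      2 * D + η = m ^ 2 := by
    refine ⟨Real.sqrt (2 * D + η), Real.sqrt_nonneg _, ?_, (Real.sq_sqrt (by positivity)).symm⟩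
    rw [show Real.sqrt (2 * D + η) = (2 * D + η) ^ ((1:ℝ)/2) from Real.sqrt_eq_rpow _,
      ← Real.rpow_natCast ((2 * D + η) ^ ((1:ℝ)/2)) 3, ← Real.rpow_mul (by positivity)]
    norm_num
  rw [hae, hae2, hme]
  have hd1 : -D ≤ d := neg_le_of_abs_le hd
  have hd2 : d ≤ D := le_of_abs_le hd
  have ha0 : a ≠ 0 := ha.ne'
  have hε0 : ε ≠ 0 := hε.ne'
  rw [← sub_nonneg]
  rcases lt_or_gt_of_ne hx1 with h1 | h1
  · -- x₁ < 0, so x₂ > 0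
    have h2 : 0 < x₂ := by nlinarith
    rw [Real.sign_of_neg h1, Real.sign_of_pos h2, abs_of_pos h2]
    have key : -(γ - 1 / 2 - D - (2 / (3 * ε)) * m ^ 3) * ε * a - (2 / 3 - ε) * x₂ ^ 3 / a ^ 2
        - (-(γ - (-1) * d) * ε * a - x₂ ^ 3 / a ^ 2
          + ε * (x₂ ^ 2 / a) * (1 / 2 - (-1) * 1) + x₂ * d + x₂ * (D + η))
        = (ε * a * (D + d) + x₂ * (D - d))
          + ε * ((x₂ - a) ^ 2 * (2 * x₂ + a)) / (2 * a ^ 2)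
          + ((x₂ - m * a) ^ 2 * (x₂ + 2 * m * a)) / (3 * a ^ 2)
          + x₂ * (m ^ 2 - (2 * D + η)) := by
      field_simp
      ring
    rw [key, hme2]
    have t1 : 0 ≤ ε * a * (D + d) + x₂ * (D - d) := by
      have := mul_nonneg (mul_nonneg hε.le ha.le) (by linarith : (0:ℝ) ≤ D + d)
      nlinarith
    have t2 : 0 ≤ ε * ((x₂ - a) ^ 2 * (2 * x₂ + a)) / (2 * a ^ 2) := by positivity
    have t3 : 0 ≤ ((x₂ - m * a) ^ 2 * (x₂ + 2 * m * a)) / (3 * a ^ 2) := by positivity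
    linarith
  · have h2 : x₂ < 0 := by nlinarith
    rw [Real.sign_of_pos h1, Real.sign_of_neg h2, abs_of_neg h2]
    have key : -(γ - 1 / 2 - D - (2 / (3 * ε)) * m ^ 3) * ε * a - (2 / 3 - ε) * (-x₂) ^ 3 / a ^ 2
        - (-(γ - 1 * d) * ε * a - (-x₂) ^ 3 / a ^ 2
          + ε * (x₂ ^ 2 / a) * (1 / 2 - 1 * (-1)) + x₂ * d + (-x₂) * (D + η))
        = (ε * a * (D - d) + (-x₂) * (D + d))
          + ε * (((-x₂) - a) ^ 2 * (2 * (-x₂) + a)) / (2 * a ^ 2)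
          + (((-x₂) - m * a) ^ 2 * ((-x₂) + 2 * m * a)) / (3 * a ^ 2)
          + (-x₂) * (m ^ 2 - (2 * D + η)) := by
      field_simp
      ring
    rw [key, hme2]
    have hx2 : 0 < -x₂ := by linarith
    have t1 : 0 ≤ ε * a * (D - d) + (-x₂) * (D + d) := by
      have := mul_nonneg (mul_nonneg hε.le ha.le) (by linarith : (0:ℝ) ≤ D - d)
      nlinarith
    have t2 : 0 ≤ ε * (((-x₂) - a) ^ 2 * (2 * (-x₂) + a)) / (2 * a ^ 2) := by positivity
    have t3 : 0 ≤ (((-x₂) - m * a) ^ 2 * ((-x₂) + 2 * m * a)) / (3 * a ^ 2) := by positivity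
    linarith
end

section
/- Let γ > 0, x₁₀ > 0, x₂₀ ≤ 0 with x₂₀² < 2γx₁₀. Define B = γx₁₀²/(2γx₁₀ − x₂₀²), ω = √(γ/B), φ = π + arccos(1 − x₂₀²/(γx₁₀)), x₁(t) = −(γ/ω²)·cos(ωt + φ) + B, x₂(t) = (γ/ω)·sin(ωt + φ), and T = (2π − φ)/ω. Then the energy t ↦ γ·x₁(t) + ½·x₂(t)² is monotone nonincreasing on [0, T]. -/
/-- Along the analytic fourth-quadrant solution
`x₁(t) = −(γ/ω²)cos(ωt+φ) + B`, `x₂(t) = (γ/ω)sin(ωt+φ)` with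
`B = γx₁₀²/(2γx₁₀ − x₂₀²)`, `ω = √(γ/B)`, `φ = π + arccos(1 − x₂₀²/(γx₁₀))`,
and `T = (2π − φ)/ω`, the energy `t ↦ γx₁(t) + ½x₂(t)²` is monotone
nonincreasing on `[0, T]`. -/
theorem stmt_17 (γ x₁₀ x₂₀ B ω φ T : ℝ) (hγ : 0 < γ) (h₁ : 0 < x₁₀)
    (h₂ : x₂₀ ≤ 0) (h₃ : x₂₀ ^ 2 < 2 * γ * x₁₀)
    (hB : B = γ * x₁₀ ^ 2 / (2 * γ * x₁₀ - x₂₀ ^ 2))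
    (hω : ω = Real.sqrt (γ / B))
    (hφ : φ = Real.pi + Real.arccos (1 - x₂₀ ^ 2 / (γ * x₁₀)))
    (hT : T = (2 * Real.pi - φ) / ω) :
    AntitoneOn (fun t =>
        γ * (-(γ / ω ^ 2) * Real.cos (ω * t + φ) + B)
          + (1 / 2) * (γ / ω * Real.sin (ω * t + φ)) ^ 2)
      (Set.Icc (0 : ℝ) T) := by
  have hden : 0 < 2 * γ * x₁₀ - x₂₀ ^ 2 := by linarith
  have hBpos : 0 < B := by
    rw [hB]; positivity
  have hωpos : 0 < ω := by
    rw [hω]; exact Real.sqrt_pos.mpr (div_pos hγ hBpos)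
  have hφπ : Real.pi ≤ φ := by
    rw [hφ]; linarith [Real.arccos_nonneg (1 - x₂₀ ^ 2 / (γ * x₁₀))]
  have hφ2π : φ ≤ 2 * Real.pi := by
    rw [hφ]; linarith [Real.arccos_le_pi (1 - x₂₀ ^ 2 / (γ * x₁₀))]
  intro a ha b hb hab
  obtain ⟨ha0, haT⟩ := ha
  obtain ⟨hb0, hbT⟩ := hb
  have hbω : ω * b + φ ≤ 2 * Real.pi := by
    have : ω * b ≤ ω * T := by nlinarith
    rw [hT] at this
    rw [mul_div_cancel₀ _ (ne_of_gt hωpos)] at this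
    linarith
  have haφ : Real.pi ≤ ω * a + φ := by nlinarith
  -- cos (ω a + φ) ≤ cos (ω b + φ)
  have hcos : Real.cos (ω * a + φ) ≤ Real.cos (ω * b + φ) := by
    have e1 : Real.cos (ω * a + φ) = Real.cos (2 * Real.pi - (ω * a + φ)) := by
      rw [Real.cos_two_pi_sub]
    have e2 : Real.cos (ω * b + φ) = Real.cos (2 * Real.pi - (ω * b + φ)) := by
      rw [Real.cos_two_pi_sub]
    rw [e1, e2]
    apply Real.cos_le_cos_of_nonneg_of_le_pi
    · linarith
    · have : ω * a + φ ≤ ω * b + φ := by nlinarith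
      linarith
    · nlinarith
  have hω0 : ω ≠ 0 := ne_of_gt hωpos
  have rw1 : ∀ θ : ℝ, γ * (-(γ / ω ^ 2) * Real.cos θ + B)
      + (1 / 2) * (γ / ω * Real.sin θ) ^ 2
      = γ * B + γ ^ 2 / ω ^ 2 * (1 / 2 - Real.cos θ - Real.cos θ ^ 2 / 2) := by
    intro θ
    rw [mul_pow, Real.sin_sq]
    field_simp
    ring
  simp only [rw1]
  have hcb' : Real.cos (ω * b + φ) ≤ 1 := Real.cos_le_one _
  have hca' : -1 ≤ Real.cos (ω * a + φ) := Real.neg_one_le_cos _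
  have key : γ ^ 2 / ω ^ 2 * (1 / 2 - Real.cos (ω * b + φ) - Real.cos (ω * b + φ) ^ 2 / 2)
      ≤ γ ^ 2 / ω ^ 2 * (1 / 2 - Real.cos (ω * a + φ) - Real.cos (ω * a + φ) ^ 2 / 2) := by
    apply mul_le_mul_of_nonneg_left _ (by positivity)
    nlinarith
  linarith
end
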